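/- arXiv:1410.2444 — 3 statements merged into one kernel-verified Lean document; each statement's English description precedes it below -/
import Mathlib

section
/- Let Ω ⊂ ℝ^n be a uniform domain. Then for each α ∈ (0,1) there exists a finite constant C > 0, depending only on α and Ω, such that for every continuously differentiable function u : Ω → ℝ one has sup_{x,y∈Ω, x≠y} |u(x)−u(y)|/|x−y|^α ≤ C · sup_{x∈Ω} ( dist(x,∂Ω)^{1−α} |∇u(x)| ). -/
/-!
Write `d = dist(·, ∂Ω)`. The weighted bound gives `|∇u| ≤ K (d z / 2) ^ (α - 1)` on the ball
`B(z, d z / 2)`. Along a curve `γ` whose arc length `ℓ t` from its start never exceeds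
`c · d (γ t)`, these Lipschitz bounds over a fine partition, combined with the concavity estimate
`q ^ (α - 1) (q - p) ≤ (q ^ α - p ^ α) / α`, turn increments of `u ∘ γ` into increments of `ℓ ^ α`,
so `|u (γ t) - u (γ 0)| ≲ K ℓ(t) ^ α`. A uniform-domain curve from `x` to `y`, split at its
arc-length midpoint, satisfies this condition on each half (the second one run backwards), and
its length is at most `c |x - y|`.
-/

open MeasureTheory Metric Set Filter
open scoped ENNReal NNReal Topology

noncomputable section

abbrev En (n : ℕ) : Type := EuclideanSpace ℝ (Fin n)

/-- Ω is a uniform domain: any two points x, y ∈ Ω can be joined by a rectifiable curve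
in Ω of length ≤ c|x−y| such that at every point z of the curve the shorter of the two
subarcs (from x to z and from z to y) has length at most c·dist(z,∂Ω). -/
def UniformDomain (n : ℕ) (Ω : Set (En n)) : Prop :=
  Ω.Nonempty ∧ Ω ≠ Set.univ ∧ IsOpen Ω ∧
  ∃ c : ℝ, 0 < c ∧ ∀ x ∈ Ω, ∀ y ∈ Ω,
    ∃ γ : ℝ → En n, ContinuousOn γ (Set.Icc 0 1) ∧ γ 0 = x ∧ γ 1 = y ∧
      (∀ t ∈ Set.Icc (0 : ℝ) 1, γ t ∈ Ω) ∧
      eVariationOn γ (Set.Icc 0 1) ≤ ENNReal.ofReal (c * dist x y) ∧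
      ∀ t ∈ Set.Icc (0 : ℝ) 1,
        min (eVariationOn γ (Set.Icc 0 t)) (eVariationOn γ (Set.Icc t 1)) ≤
          ENNReal.ofReal (c * Metric.infDist (γ t) (frontier Ω))

lemma rpow_sub_one_mul_sub_le {α p q : ℝ} (hα0 : 0 < α) (hα1 : α ≤ 1) (hp : 0 ≤ p)
    (hpq : p ≤ q) : q ^ (α - 1) * (q - p) ≤ (q ^ α - p ^ α) / α := by
  rcases (hp.trans hpq).eq_or_lt with rfl | hq
  · simp [le_antisymm hpq hp]
  -- Bernoulli's inequality for `(p / q) ^ α`, multiplied by `q ^ α`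
  have h := rpow_one_add_le_one_add_mul_self (s := p / q - 1)
    (by linarith [div_nonneg hp hq.le]) hα0.le hα1
  rw [add_sub_cancel, Real.div_rpow hp hq.le, div_le_iff₀ (by positivity)] at h
  rw [le_div_iff₀ hα0, Real.rpow_sub_one hq.ne']
  have : q ^ α / q * (q - p) = q ^ α - q ^ α * (p / q) := by field_simp
  rw [this]
  linarith

lemma rpow_sub_one_mul_sub_le_of_le_mul {α c p q r : ℝ} (hα0 : 0 < α) (hα1 : α ≤ 1) (hc : 0 < c)
    (hp : 0 ≤ p) (hpq : p ≤ q) (hqr : q ≤ c * r) :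
    r ^ (α - 1) * (q - p) ≤ c ^ (1 - α) / α * (q ^ α - p ^ α) := by
  rcases (hp.trans hpq).eq_or_lt with rfl | hq
  · simp [le_antisymm hpq hp]
  calc r ^ (α - 1) * (q - p) ≤ (q / c) ^ (α - 1) * (q - p) := by
        gcongr ?_ * ?_
        exact Real.rpow_le_rpow_of_nonpos (by positivity) ((div_le_iff₀' hc).2 hqr) (by linarith)
    _ = c ^ (1 - α) * (q ^ (α - 1) * (q - p)) := by
        rw [Real.div_rpow hq.le hc.le, div_eq_mul_inv, ← Real.rpow_neg hc.le, neg_sub]; ring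
    _ ≤ c ^ (1 - α) * ((q ^ α - p ^ α) / α) := by
        gcongr; exact rpow_sub_one_mul_sub_le hα0 hα1 hp hpq
    _ = c ^ (1 - α) / α * (q ^ α - p ^ α) := by ring

theorem norm_sub_le_of_forall_norm_sub_le {E : Type*} [SeminormedAddCommGroup E] {f : ℝ → E}
    {g : ℝ → ℝ} {a b η : ℝ} (hη : 0 < η) (hab : a ≤ b)
    (h : ∀ s ∈ Icc a b, ∀ t ∈ Icc a b, s ≤ t → t - s < η → ‖f t - f s‖ ≤ g t - g s) :
    ‖f b - f a‖ ≤ g b - g a := by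
  have key : ∀ N : ℕ, ∀ s ∈ Icc a b, ∀ t ∈ Icc a b, s ≤ t → t - s < (N + 1) * η →
      ‖f t - f s‖ ≤ g t - g s := by
    intro N
    induction N with
    | zero => simpa using h
    | succ N ih =>
      intro s hs t ht hst hlt
      -- split `[s, t]` at the point `m` with `t - m = (t - s) / (N + 2) < η`
      set m := s + (t - s) * (N + 1) / (N + 2) with hm
      have hm₁ : s ≤ m := le_add_of_nonneg_right (by have := sub_nonneg.2 hst; positivity)
      have hm₂ : t - m = (t - s) / (N + 2) := by rw [hm]; field_simp; ring
      have hm₃ : m ≤ t := sub_nonneg.1 (hm₂ ▸ div_nonneg (sub_nonneg.2 hst) (by positivity))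
      have hmem : m ∈ Icc a b := ⟨hs.1.trans hm₁, hm₃.trans ht.2⟩
      push_cast at hlt
      calc ‖f t - f s‖ ≤ ‖f t - f m‖ + ‖f m - f s‖ := norm_sub_le_norm_sub_add_norm_sub _ _ _
        _ ≤ (g t - g m) + (g m - g s) := by
          gcongr
          · refine h m hmem t ht hm₃ ?_
            rw [hm₂, div_lt_iff₀ (by positivity)]; linarith
          · refine ih s hs m hmem hm₁ ?_
            have : m - s = (t - s) * (N + 1) / (N + 2) := by ring
            rw [this, div_lt_iff₀ (by positivity)]; nlinarith
        _ = g t - g s := by ring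
  obtain ⟨N, hN⟩ := exists_nat_gt ((b - a) / η)
  exact key N a ⟨le_rfl, hab⟩ b ⟨hab, le_rfl⟩ hab
    (by rw [div_lt_iff₀ hη] at hN; nlinarith)

section Geometry

variable {E : Type*} [NormedAddCommGroup E] [NormedSpace ℝ E]

lemma ball_infDist_frontier_subset [FiniteDimensional ℝ E] {Ω : Set E} {z : E} (hz : z ∈ Ω) :
    ball z (infDist z (frontier Ω)) ⊆ Ω := by
  rcases eq_or_ne Ω univ with rfl | hΩ
  · exact subset_univ _
  obtain ⟨y, hy, hzy⟩ := exists_mem_frontier_infDist_compl_eq_dist hz hΩ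
  exact (ball_subset_ball ((infDist_le_dist_of_mem hy).trans hzy.ge)).trans
    ball_infDist_compl_subset

lemma abs_sub_le_of_weighted_norm_fderivWithin_le [FiniteDimensional ℝ E] {Ω : Set E}
    {u : E → ℝ} {α K r : ℝ} {z w : E} (hΩ : IsOpen Ω) (hu : DifferentiableOn ℝ u Ω)
    (hα : α ≤ 1)
    (hK : ∀ z ∈ Ω, infDist z (frontier Ω) ^ (1 - α) * ‖fderivWithin ℝ u Ω z‖ ≤ K)
    (hz : z ∈ Ω) (hr : 0 < r) (hrz : 2 * r ≤ infDist z (frontier Ω)) (hw : w ∈ ball z r) :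
    |u w - u z| ≤ K * r ^ (α - 1) * dist w z := by
  have hball : ball z r ⊆ Ω :=
    (ball_subset_ball (by linarith)).trans (ball_infDist_frontier_subset hz)
  have hgrad : ∀ p ∈ ball z r, ‖fderivWithin ℝ u (ball z r) p‖ ≤ K * r ^ (α - 1) := by
    intro p hp
    have hrp : r ≤ infDist p (frontier Ω) := by
      have := infDist_le_infDist_add_dist (x := z) (y := p) (s := frontier Ω)
      rw [mem_ball] at hp
      linarith [dist_comm z p]
    rw [fderivWithin_of_isOpen isOpen_ball hp, ← fderivWithin_of_isOpen hΩ (hball hp)]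
    calc ‖fderivWithin ℝ u Ω p‖ = r ^ (α - 1) * (r ^ (1 - α) * ‖fderivWithin ℝ u Ω p‖) := by
          rw [← mul_assoc, ← Real.rpow_add hr]; simp
      _ ≤ r ^ (α - 1) * K := by
          gcongr
          refine le_trans ?_ (hK p (hball hp))
          gcongr
      _ = K * r ^ (α - 1) := mul_comm _ _
  simpa [Real.norm_eq_abs, dist_eq_norm] using
    (convex_ball z r).norm_image_sub_le_of_norm_fderivWithin_le (hu.mono hball) hgrad
      (mem_ball_self hr) hw

end Geometry

section Variation

variable {ι E : Type*} [LinearOrder ι] [PseudoMetricSpace E]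

lemma eVariationOn_Icc_add_Icc (f : ι → E) {a b c : ι} (hab : a ≤ b) (hbc : b ≤ c) :
    eVariationOn f (Icc a b) + eVariationOn f (Icc b c) = eVariationOn f (Icc a c) := by
  simpa using eVariationOn.Icc_add_Icc f hab hbc (mem_univ b)

lemma dist_le_eVariationOn_Icc_toReal_sub {f : ι → E} {a s t : ι} (has : a ≤ s) (hst : s ≤ t)
    (hfin : eVariationOn f (Icc a t) ≠ ∞) :
    dist (f s) (f t) ≤ (eVariationOn f (Icc a t)).toReal - (eVariationOn f (Icc a s)).toReal := by
  rw [← eVariationOn_Icc_add_Icc f has hst] at hfin ⊢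
  rw [ENNReal.toReal_add (ENNReal.add_ne_top.1 hfin).1 (ENNReal.add_ne_top.1 hfin).2,
    add_sub_cancel_left, dist_edist]
  exact ENNReal.toReal_mono (ENNReal.add_ne_top.1 hfin).2
    (eVariationOn.edist_le f ⟨le_rfl, hst⟩ ⟨hst, le_rfl⟩)

lemma continuousOn_eVariationOn_Icc_toReal [TopologicalSpace ι] [OrderTopology ι] {f : ι → E}
    {a b : ι} (hf : ContinuousOn f (Icc a b)) (hfin : eVariationOn f (Icc a b) ≠ ∞) :
    ContinuousOn (fun t ↦ (eVariationOn f (Icc a t)).toReal) (Icc a b) := by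
  have hbv : LocallyBoundedVariationOn f (Icc a b) :=
    BoundedVariationOn.locallyBoundedVariationOn hfin
  have hV : EqOn (fun t ↦ (eVariationOn f (Icc a t)).toReal)
      (variationOnFromTo f (Icc a b) a) (Icc a b) := fun t ht ↦ by
    rw [variationOnFromTo.eq_of_le _ _ ht.1, inter_eq_right.2 (Icc_subset_Icc le_rfl ht.2)]
  refine ContinuousOn.congr (fun t ht ↦ ?_) hV
  have hleft := variationOnFromTo.tendsto_left (left_mem_Icc.2 (ht.1.trans ht.2)) ht hbv
    ((hf t ht).mono inter_subset_left)
  have hright := variationOnFromTo.tendsto_right (left_mem_Icc.2 (ht.1.trans ht.2)) ht hbv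
    ((hf t ht).mono inter_subset_left)
  rw [dist_self, sub_zero] at hleft
  rw [dist_self, add_zero] at hright
  refine (continuousWithinAt_insert_self.2 (ContinuousWithinAt.union hleft hright)).mono ?_
  intro s hs
  rcases lt_trichotomy s t with h | rfl | h
  · exact Or.inr (Or.inl ⟨hs, h⟩)
  · exact Or.inl rfl
  · exact Or.inr (Or.inr ⟨hs, h⟩)

end Variation

lemma eVariationOn_comp_const_sub_Icc {E : Type*} [PseudoEMetricSpace E] (f : ℝ → E)
    (c a b : ℝ) :
    eVariationOn (fun s ↦ f (c - s)) (Icc a b) = eVariationOn f (Icc (c - b) (c - a)) := by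
  rw [← image_const_sub_Icc]
  exact eVariationOn.comp_eq_of_antitoneOn f (fun s ↦ c - s)
    (fun x _ y _ hxy ↦ sub_le_sub_left hxy c)

section Curves

variable {E : Type*} [NormedAddCommGroup E] [NormedSpace ℝ E] [FiniteDimensional ℝ E]
  {Ω : Set E} {u : E → ℝ} {α K c : ℝ} {γ : ℝ → E} {a b : ℝ}

theorem abs_sub_le_of_eVariationOn_Icc_le_infDist (hΩ : IsOpen Ω) (hfr : (frontier Ω).Nonempty)
    (hu : DifferentiableOn ℝ u Ω) (hα0 : 0 < α) (hα1 : α ≤ 1)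
    (hK : ∀ z ∈ Ω, infDist z (frontier Ω) ^ (1 - α) * ‖fderivWithin ℝ u Ω z‖ ≤ K)
    (hc : 0 < c) (hab : a ≤ b) (hγ : ContinuousOn γ (Icc a b)) (hγΩ : MapsTo γ (Icc a b) Ω)
    (hγd : ∀ t ∈ Icc a b,
      eVariationOn γ (Icc a t) ≤ ENNReal.ofReal (c * infDist (γ t) (frontier Ω))) :
    |u (γ b) - u (γ a)| ≤ (2 * c) ^ (1 - α) / α * K * (eVariationOn γ (Icc a b)).toReal ^ α := by
  set V : ℝ → ℝ := fun t ↦ (eVariationOn γ (Icc a t)).toReal with hV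
  have hfin : ∀ t ∈ Icc a b, eVariationOn γ (Icc a t) ≠ ∞ := fun t ht ↦
    ne_top_of_le_ne_top ENNReal.ofReal_ne_top (hγd t ht)
  have hVd : ∀ t ∈ Icc a b, V t ≤ c * infDist (γ t) (frontier Ω) := fun t ht ↦
    ENNReal.toReal_le_of_le_ofReal (mul_nonneg hc.le infDist_nonneg) (hγd t ht)
  have hK0 : 0 ≤ K := (mul_nonneg (Real.rpow_nonneg infDist_nonneg _) (norm_nonneg _)).trans
    (hK _ (hγΩ (left_mem_Icc.2 hab)))
  obtain ⟨t₀, ht₀, hmin⟩ := isCompact_Icc.exists_isMinOn (nonempty_Icc.2 hab)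
    ((continuous_infDist_pt (frontier Ω)).comp_continuousOn hγ)
  have hδ : 0 < infDist (γ t₀) (frontier Ω) :=
    (isClosed_frontier.notMem_iff_infDist_pos hfr).1
      fun h ↦ (hΩ.frontier_eq ▸ h).2 (hγΩ ht₀)
  obtain ⟨η, hη, hγη⟩ := Metric.uniformContinuousOn_iff.1
    (isCompact_Icc.uniformContinuousOn_of_continuous hγ) _ (half_pos hδ)
  have key := norm_sub_le_of_forall_norm_sub_le (f := u ∘ γ)
    (g := fun t ↦ (2 * c) ^ (1 - α) / α * K * V t ^ α) hη hab ?_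
  · simpa [hV, Real.zero_rpow hα0.ne'] using key
  intro s hs t ht hst hts
  set r := infDist (γ t) (frontier Ω) / 2 with hr_def
  have hδt : infDist (γ t₀) (frontier Ω) ≤ infDist (γ t) (frontier Ω) := isMinOn_iff.1 hmin t ht
  have hr : 0 < r := by linarith
  have hγst : γ s ∈ ball (γ t) r := by
    have := hγη s hs t ht (by rwa [Real.dist_eq, abs_sub_comm, abs_of_nonneg (by linarith)])
    rw [mem_ball]; linarith
  calc ‖(u ∘ γ) t - (u ∘ γ) s‖ = |u (γ s) - u (γ t)| := by
        rw [Real.norm_eq_abs, abs_sub_comm]; rfl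
    _ ≤ K * r ^ (α - 1) * dist (γ s) (γ t) :=
        abs_sub_le_of_weighted_norm_fderivWithin_le hΩ hu hα1 hK (hγΩ ht) hr (by linarith) hγst
    _ ≤ K * (r ^ (α - 1) * (V t - V s)) := by
        rw [mul_assoc]; gcongr; exact dist_le_eVariationOn_Icc_toReal_sub hs.1 hst (hfin t ht)
    _ ≤ K * ((2 * c) ^ (1 - α) / α * (V t ^ α - V s ^ α)) := by
        refine mul_le_mul_of_nonneg_left ?_ hK0
        refine rpow_sub_one_mul_sub_le_of_le_mul (c := 2 * c) hα0 hα1 (by positivity)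
          ENNReal.toReal_nonneg
          (ENNReal.toReal_mono (hfin t ht) (eVariationOn.mono γ (Icc_subset_Icc le_rfl hst))) ?_
        rw [hr_def]; linarith [hVd t ht]
    _ = _ := by ring

theorem abs_sub_le_of_eVariationOn_Icc_le_infDist' (hΩ : IsOpen Ω) (hfr : (frontier Ω).Nonempty)
    (hu : DifferentiableOn ℝ u Ω) (hα0 : 0 < α) (hα1 : α ≤ 1)
    (hK : ∀ z ∈ Ω, infDist z (frontier Ω) ^ (1 - α) * ‖fderivWithin ℝ u Ω z‖ ≤ K)
    (hc : 0 < c) (hab : a ≤ b) (hγ : ContinuousOn γ (Icc a b)) (hγΩ : MapsTo γ (Icc a b) Ω)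
    (hγd : ∀ t ∈ Icc a b,
      eVariationOn γ (Icc t b) ≤ ENNReal.ofReal (c * infDist (γ t) (frontier Ω))) :
    |u (γ b) - u (γ a)| ≤ (2 * c) ^ (1 - α) / α * K * (eVariationOn γ (Icc a b)).toReal ^ α := by
  have hrev : MapsTo (fun s ↦ a + b - s) (Icc a b) (Icc a b) := fun s hs ↦
    ⟨by linarith [hs.2], by linarith [hs.1]⟩
  have h := abs_sub_le_of_eVariationOn_Icc_le_infDist (γ := fun s ↦ γ (a + b - s)) hΩ hfr hu
    hα0 hα1 hK hc hab (hγ.comp (continuous_const.sub continuous_id).continuousOn hrev)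
    (hγΩ.comp hrev) fun t ht ↦ by
      rw [eVariationOn_comp_const_sub_Icc, add_sub_cancel_left]
      exact hγd _ (hrev ht)
  rw [eVariationOn_comp_const_sub_Icc, add_sub_cancel_left, add_sub_cancel_right] at h
  simpa only [add_sub_cancel_left, add_sub_cancel_right, abs_sub_comm] using h

theorem abs_sub_le_of_min_eVariationOn_le_infDist (hΩ : IsOpen Ω)
    (hfr : (frontier Ω).Nonempty) (hu : DifferentiableOn ℝ u Ω) (hα0 : 0 < α) (hα1 : α ≤ 1)
    (hK : ∀ z ∈ Ω, infDist z (frontier Ω) ^ (1 - α) * ‖fderivWithin ℝ u Ω z‖ ≤ K)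
    (hc : 0 < c) (hab : a ≤ b) (hγ : ContinuousOn γ (Icc a b)) (hγΩ : MapsTo γ (Icc a b) Ω)
    (hγd : ∀ t ∈ Icc a b, min (eVariationOn γ (Icc a t)) (eVariationOn γ (Icc t b)) ≤
      ENNReal.ofReal (c * infDist (γ t) (frontier Ω)))
    (hfin : eVariationOn γ (Icc a b) ≠ ∞) :
    |u (γ b) - u (γ a)| ≤
      2 * ((2 * c) ^ (1 - α) / α) * K * ((eVariationOn γ (Icc a b)).toReal / 2) ^ α := by
  obtain ⟨t₁, ht₁, hhalf⟩ : ∃ t₁ ∈ Icc a b,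
      (eVariationOn γ (Icc a t₁)).toReal = (eVariationOn γ (Icc a b)).toReal / 2 :=
    have h₀ : 0 ≤ (eVariationOn γ (Icc a b)).toReal := ENNReal.toReal_nonneg
    intermediate_value_Icc hab (continuousOn_eVariationOn_Icc_toReal hγ hfin)
      ⟨by simpa using div_nonneg h₀ zero_le_two, half_le_self h₀⟩
  have hsplit := eVariationOn_Icc_add_Icc γ ht₁.1 ht₁.2
  rw [← hsplit] at hfin hhalf
  obtain ⟨hfin₁, hfin₂⟩ := ENNReal.add_ne_top.1 hfin
  have hmid : eVariationOn γ (Icc a t₁) = eVariationOn γ (Icc t₁ b) := by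
    rw [← ENNReal.toReal_eq_toReal_iff' hfin₁ hfin₂]
    rw [ENNReal.toReal_add hfin₁ hfin₂] at hhalf
    linarith
  have hfwd := abs_sub_le_of_eVariationOn_Icc_le_infDist hΩ hfr hu hα0 hα1 hK hc ht₁.1
    (hγ.mono (Icc_subset_Icc le_rfl ht₁.2)) (hγΩ.mono_left (Icc_subset_Icc le_rfl ht₁.2))
    fun t ht ↦ by
      have hle : eVariationOn γ (Icc a t) ≤ eVariationOn γ (Icc t b) :=
        calc eVariationOn γ (Icc a t) ≤ eVariationOn γ (Icc a t₁) :=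
              eVariationOn.mono γ (Icc_subset_Icc le_rfl ht.2)
          _ = eVariationOn γ (Icc t₁ b) := hmid
          _ ≤ eVariationOn γ (Icc t b) := eVariationOn.mono γ (Icc_subset_Icc ht.2 le_rfl)
      simpa [min_eq_left hle] using hγd t ⟨ht.1, ht.2.trans ht₁.2⟩
  have hbwd := abs_sub_le_of_eVariationOn_Icc_le_infDist' hΩ hfr hu hα0 hα1 hK hc ht₁.2
    (hγ.mono (Icc_subset_Icc ht₁.1 le_rfl)) (hγΩ.mono_left (Icc_subset_Icc ht₁.1 le_rfl))
    fun t ht ↦ by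
      have hle : eVariationOn γ (Icc t b) ≤ eVariationOn γ (Icc a t) :=
        calc eVariationOn γ (Icc t b) ≤ eVariationOn γ (Icc t₁ b) :=
              eVariationOn.mono γ (Icc_subset_Icc ht.1 le_rfl)
          _ = eVariationOn γ (Icc a t₁) := hmid.symm
          _ ≤ eVariationOn γ (Icc a t) := eVariationOn.mono γ (Icc_subset_Icc le_rfl ht.1)
      simpa [min_eq_right hle] using hγd t ⟨ht₁.1.trans ht.1, ht.2⟩
  rw [hsplit] at hhalf
  rw [← hmid, hhalf] at hbwd
  rw [hhalf] at hfwd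
  calc |u (γ b) - u (γ a)| ≤ |u (γ b) - u (γ t₁)| + |u (γ t₁) - u (γ a)| := abs_sub_le _ _ _
    _ ≤ _ := add_le_add hbwd hfwd
    _ = _ := by ring

end Curves

/-- in a uniform domain Ω, for each α ∈ (0,1) there is a constant C > 0,
depending only on α and Ω, such that every C¹ function u on Ω satisfies
[u]_{C^α(Ω)} ≤ C · sup_{x∈Ω} dist(x,∂Ω)^{1−α} |∇u(x)|. (The supremum is expressed by
quantifying over upper bounds K of the weighted gradient.) -/
theorem holder_seminorm_le_weighted_gradient_sup
    (n : ℕ) (Ω : Set (En n)) (hΩ : UniformDomain n Ω) (α : ℝ) (hα : α ∈ Set.Ioo (0 : ℝ) 1) :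
    ∃ C : ℝ, 0 < C ∧
      ∀ u : En n → ℝ, ContDiffOn ℝ 1 u Ω →
        ∀ K : ℝ, (∀ z ∈ Ω, Metric.infDist z (frontier Ω) ^ (1 - α) *
            ‖fderivWithin ℝ u Ω z‖ ≤ K) →
          ∀ x ∈ Ω, ∀ y ∈ Ω, |u x - u y| ≤ C * K * dist x y ^ α := by
  obtain ⟨hne, huniv, hΩo, c, hc, hcurve⟩ := hΩ
  have hfr : (frontier Ω).Nonempty := nonempty_frontier_iff.2 ⟨hne, huniv⟩
  have hα0 := hα.1
  refine ⟨2 * ((2 * c) ^ (1 - α) / α) * c ^ α, by positivity, fun u hu K hK x hx y hy ↦ ?_⟩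
  obtain ⟨γ, hγ, rfl, rfl, hγΩ, hlen, hγd⟩ := hcurve x hx y hy
  have hK0 : 0 ≤ K :=
    (mul_nonneg (Real.rpow_nonneg infDist_nonneg _) (norm_nonneg _)).trans (hK _ hx)
  have hL : (eVariationOn γ (Icc 0 1)).toReal / 2 ≤ c * dist (γ 0) (γ 1) := by
    linarith [ENNReal.toReal_le_of_le_ofReal (by positivity) hlen,
      ENNReal.toReal_nonneg (a := eVariationOn γ (Icc 0 1))]
  calc |u (γ 0) - u (γ 1)| = |u (γ 1) - u (γ 0)| := abs_sub_comm _ _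
    _ ≤ 2 * ((2 * c) ^ (1 - α) / α) * K * ((eVariationOn γ (Icc 0 1)).toReal / 2) ^ α :=
        abs_sub_le_of_min_eVariationOn_le_infDist hΩo hfr (hu.differentiableOn one_ne_zero) hα0
          hα.2.le hK hc zero_le_one hγ hγΩ hγd (ne_top_of_le_ne_top ENNReal.ofReal_ne_top hlen)
    _ ≤ 2 * ((2 * c) ^ (1 - α) / α) * K * (c * dist (γ 0) (γ 1)) ^ α := by gcongr
    _ = 2 * ((2 * c) ^ (1 - α) / α) * c ^ α * K * dist (γ 0) (γ 1) ^ α := by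
        rw [Real.mul_rpow hc.le dist_nonneg]; ring
end
end

section
/- Let n ≥ 3 and let P be an odd, harmonic, homogeneous polynomial of degree l ≥ 3 on ℝ^n. For r,s ∈ {1,…,n} define P_{rs} := (l(l−1))^{−1} ∂_r∂_s P. Then: (i) each P_{rs} is an odd, harmonic, homogeneous polynomial of degree l−2; (ii) P(x) = Σ_{r,s=1}^n x_r x_s P_{rs}(x) for all x ∈ ℝ^n; (iii) for every x ∈ ℝ^n \ {0}, Σ_{r,s=1}^n ∂_r∂_s ( P_{rs}(x) |x|^{−(n+l−5)} ) = (n+l−3)(n+l−5) · P(x) |x|^{−(n−1+l)}. -/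
open MeasureTheory Metric Set Filter
open scoped ENNReal NNReal Topology

noncomputable section

/-- P is odd: P(−x) = −P(x) for all x. -/
def IsOddPoly (n : ℕ) (P : MvPolynomial (Fin n) ℝ) : Prop :=
  ∀ x : Fin n → ℝ, MvPolynomial.eval (-x) P = -MvPolynomial.eval x P

/-- P is harmonic: ΔP = 0. -/
def IsHarmonicPoly (n : ℕ) (P : MvPolynomial (Fin n) ℝ) : Prop :=
  ∑ j : Fin n, MvPolynomial.pderiv j (MvPolynomial.pderiv j P) = 0

/-- The partial derivative ∂_r of a function on ℝⁿ. -/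
def partialDer (n : ℕ) (r : Fin n) (f : En n → ℝ) : En n → ℝ :=
  fun x => fderiv ℝ f x (EuclideanSpace.single r 1)

/-!
Parts (i) and (ii) are algebra. Partial derivatives commute with each other, hence with `Δ`, and
lower the degree by one; an odd polynomial that is homogeneous of even degree vanishes. Euler's
identity `∑ x_r ∂_r Q = k Q`, applied to `P` and to each `∂_s P`, gives
`∑ x_r x_s ∂_r ∂_s P = l (l - 1) P`.

For (iii), differentiating `Q(x) |x|^(-m)` twice gives

    ∂_r ∂_s Q |x|^(-m) - m (x_r ∂_s Q + ∂_r (x_s Q)) |x|^(-m-2) + m (m + 2) x_r x_s Q |x|^(-m-4).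

By harmonicity of `P`, the matrix `(P_rs)` is trace free and divergence free in each index, so after
summing over `r, s` only the last term survives, and by (ii) it equals `m (m + 2) P |x|^(-m-4)`.
Take `m = n + l - 5`.
-/

open MvPolynomial

namespace MvPolynomial

variable {R σ : Type*} [CommSemiring R]

theorem pderiv_pderiv_comm (i j : σ) (p : MvPolynomial σ R) :
    pderiv i (pderiv j p) = pderiv j (pderiv i p) := by
  have hX : ∀ a b k : σ, pderiv a (pderiv b (X k : MvPolynomial σ R)) = 0 := by
    classical
    intro a b k
    rw [pderiv_X, Pi.single_apply]
    split_ifs <;> simp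
  induction p using MvPolynomial.induction_on with
  | C a => simp
  | add p q hp hq => simp only [map_add, hp, hq]
  | mul_X p k hp =>
    simp only [pderiv_mul, map_add, hp, hX]
    ring

theorem IsHomogeneous.eval_smul {φ : MvPolynomial σ R} {k : ℕ} (h : φ.IsHomogeneous k) (c : R)
    (x : σ → R) : eval (c • x) φ = c ^ k * eval x φ := by
  conv_lhs => rw [φ.as_sum]
  conv_rhs => rw [φ.as_sum]
  rw [map_sum, map_sum, Finset.mul_sum]
  refine Finset.sum_congr rfl fun d hd => ?_
  simp only [eval_monomial, Finsupp.prod, Pi.smul_apply, smul_eq_mul, mul_pow,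
    Finset.prod_mul_distrib, Finset.prod_pow_eq_pow_sum, ← h.degree_eq_sum_deg_support hd]
  ring

theorem IsHomogeneous.sum_X_mul_X_mul_pderiv_pderiv [Fintype σ] {φ : MvPolynomial σ R} {k : ℕ}
    (h : φ.IsHomogeneous k) :
    ∑ r, ∑ s, X r * X s * pderiv r (pderiv s φ) = (k * (k - 1)) • φ := by
  calc ∑ r, ∑ s, X r * X s * pderiv r (pderiv s φ)
      = ∑ s, X s * ∑ r, X r * pderiv r (pderiv s φ) := by
        rw [Finset.sum_comm]
        simp only [Finset.mul_sum]
        exact Finset.sum_congr rfl fun s _ => Finset.sum_congr rfl fun r _ => by ring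
    _ = ∑ s, (k - 1) • (X s * pderiv s φ) := by
        simp only [h.pderiv.sum_X_mul_pderiv, mul_smul_comm]
    _ = (k * (k - 1)) • φ := by
        rw [← Finset.smul_sum, h.sum_X_mul_pderiv, smul_smul, mul_comm]

theorem IsHomogeneous.sum_X_mul_X_mul_inv_smul_pderiv_pderiv {K : Type*} [Field K]
    [CharZero K] [Fintype σ] {φ : MvPolynomial σ K} {k : ℕ} (h : φ.IsHomogeneous k)
    (hk : 2 ≤ k) :
    ∑ r, ∑ s, X r * X s * (((k : K) * ((k : K) - 1))⁻¹ • pderiv r (pderiv s φ)) = φ := by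
  have hk₀ : (k : K) * ((k : K) - 1) ≠ 0 :=
    mul_ne_zero (Nat.cast_ne_zero.mpr (by omega)) (sub_ne_zero.mpr (Nat.cast_ne_one.mpr (by omega)))
  simp only [mul_smul_comm, ← Finset.smul_sum]
  rw [h.sum_X_mul_X_mul_pderiv_pderiv, ← Nat.cast_smul_eq_nsmul K, smul_smul]
  push_cast [show 1 ≤ k by omega]
  rw [inv_mul_cancel₀ hk₀, one_smul]

end MvPolynomial

section RealPolynomial

variable {n : ℕ} {P : MvPolynomial (Fin n) ℝ}

theorem MvPolynomial.IsHomogeneous.isOddPoly {k : ℕ} (h : P.IsHomogeneous k) (hk : Odd k) :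
    IsOddPoly n P := fun x => by
  rw [← neg_one_smul ℝ x, h.eval_smul, hk.neg_one_pow, neg_one_mul]

theorem IsOddPoly.eq_zero_of_isHomogeneous {k : ℕ} (hP : IsOddPoly n P) (h : P.IsHomogeneous k)
    (hk : Even k) : P = 0 := by
  refine MvPolynomial.funext fun x => ?_
  have hx := hP x
  rw [← neg_one_smul ℝ x, h.eval_smul, hk.neg_one_pow, one_mul] at hx
  rw [map_zero]
  linarith

protected theorem IsHarmonicPoly.pderiv (h : IsHarmonicPoly n P) (r : Fin n) :
    IsHarmonicPoly n (pderiv r P) := by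
  have hcomm : ∀ j, MvPolynomial.pderiv j (MvPolynomial.pderiv j (MvPolynomial.pderiv r P)) =
      MvPolynomial.pderiv r (MvPolynomial.pderiv j (MvPolynomial.pderiv j P)) :=
    fun j => by rw [pderiv_pderiv_comm j r, pderiv_pderiv_comm j r]
  rw [IsHarmonicPoly, Finset.sum_congr rfl fun j _ => hcomm j, ← map_sum, h, map_zero]

protected theorem IsHarmonicPoly.smul (h : IsHarmonicPoly n P) (c : ℝ) :
    IsHarmonicPoly n (c • P) := by
  rw [IsHarmonicPoly]
  simp only [Derivation.map_smul, ← Finset.smul_sum]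
  rw [h, smul_zero]

theorem IsHarmonicPoly.sum_pderiv_smul_pderiv_pderiv_left (h : IsHarmonicPoly n P) (c : ℝ)
    (s : Fin n) :
    ∑ r, pderiv r (c • pderiv r (pderiv s P)) = 0 := by
  simp only [Derivation.map_smul, ← Finset.smul_sum]
  rw [h.pderiv s, smul_zero]

theorem IsHarmonicPoly.sum_pderiv_smul_pderiv_pderiv_right (h : IsHarmonicPoly n P) (c : ℝ)
    (r : Fin n) :
    ∑ s, pderiv s (c • pderiv r (pderiv s P)) = 0 := by
  simpa only [pderiv_pderiv_comm r] using h.sum_pderiv_smul_pderiv_pderiv_left c r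

theorem IsHarmonicPoly.sum_smul_pderiv_pderiv_self (h : IsHarmonicPoly n P) (c : ℝ) :
    ∑ r, c • pderiv r (pderiv r P) = 0 := by
  rw [← Finset.smul_sum, h, smul_zero]

end RealPolynomial

section PartialDer

variable {n : ℕ} {f g : En n → ℝ} {x : En n}

theorem partialDer_add (hf : DifferentiableAt ℝ f x) (hg : DifferentiableAt ℝ g x) (r : Fin n) :
    partialDer n r (fun y => f y + g y) x = partialDer n r f x + partialDer n r g x := by
  simp only [partialDer]
  rw [fderiv_fun_add hf hg]
  rfl

theorem partialDer_sub (hf : DifferentiableAt ℝ f x) (hg : DifferentiableAt ℝ g x) (r : Fin n) :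
    partialDer n r (fun y => f y - g y) x = partialDer n r f x - partialDer n r g x := by
  simp only [partialDer]
  rw [fderiv_fun_sub hf hg]
  rfl

theorem partialDer_const_mul (hf : DifferentiableAt ℝ f x) (c : ℝ) (r : Fin n) :
    partialDer n r (fun y => c * f y) x = c * partialDer n r f x := by
  simp only [partialDer]
  rw [fderiv_const_mul hf]
  rfl

theorem partialDer_mul (hf : DifferentiableAt ℝ f x) (hg : DifferentiableAt ℝ g x) (r : Fin n) :
    partialDer n r (fun y => f y * g y) x =
      partialDer n r f x * g x + f x * partialDer n r g x := by
  simp only [partialDer]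
  rw [fderiv_fun_mul hf hg]
  simp only [add_apply, smul_apply, smul_eq_mul]
  ring

theorem partialDer_comp {φ : ℝ → ℝ} {φ' : ℝ} (hφ : HasDerivAt φ φ' (f x))
    (hf : DifferentiableAt ℝ f x) (r : Fin n) :
    partialDer n r (fun y => φ (f y)) x = φ' * partialDer n r f x := by
  have h : HasFDerivAt (fun y => φ (f y)) (φ' • fderiv ℝ f x) x :=
    hφ.comp_hasFDerivAt x hf.hasFDerivAt
  simp only [partialDer, h.fderiv, smul_apply, smul_eq_mul]

theorem Filter.EventuallyEq.partialDer_eq (h : f =ᶠ[𝓝 x] g) (r : Fin n) :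
    partialDer n r f x = partialDer n r g x := by
  simp only [partialDer, h.fderiv_eq]

theorem partialDer_coord (i r : Fin n) (x : En n) :
    partialDer n r (fun y => y i) x = if i = r then 1 else 0 := by
  have h : HasFDerivAt (fun y : En n => y i) (EuclideanSpace.proj i : En n →L[ℝ] ℝ) x :=
    (EuclideanSpace.proj i : En n →L[ℝ] ℝ).hasFDerivAt
  simp [partialDer, h.fderiv, PiLp.single_apply]

theorem differentiable_coord (i : Fin n) : Differentiable ℝ (fun y : En n => y i) :=
  (EuclideanSpace.proj i : En n →L[ℝ] ℝ).differentiable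

theorem differentiableAt_norm_of_ne_zero (hx : x ≠ 0) :
    DifferentiableAt ℝ (fun y : En n => ‖y‖) x :=
  differentiableAt_id.norm ℝ hx

theorem partialDer_norm (hx : x ≠ 0) (r : Fin n) :
    partialDer n r (fun y => ‖y‖) x = x r / ‖x‖ := by
  have hsq : partialDer n r (fun y => ‖y‖ * ‖y‖) x = 2 * x r := by
    simp only [← sq, partialDer, fderiv_norm_sq_apply]
    simp [EuclideanSpace.inner_single_right]
  rw [partialDer_mul (differentiableAt_norm_of_ne_zero hx)
    (differentiableAt_norm_of_ne_zero hx)] at hsq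
  have : ‖x‖ ≠ 0 := norm_ne_zero_iff.mpr hx
  field_simp
  linarith

theorem hasDerivAt_inv_pow (m : ℕ) {t : ℝ} (ht : t ≠ 0) :
    HasDerivAt (fun s : ℝ => (s ^ m)⁻¹) (-m * (t ^ (m + 1))⁻¹) t := by
  refine ((hasDerivAt_pow m t).fun_inv (pow_ne_zero m ht)).congr_deriv ?_
  rcases m with _ | m
  · simp
  · rw [Nat.add_sub_cancel]
    field_simp
    ring

theorem differentiable_eval (Q : MvPolynomial (Fin n) ℝ) :
    Differentiable ℝ (fun y : En n => eval (fun i => y i) Q) := by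
  induction Q using MvPolynomial.induction_on with
  | C a => simp
  | add p q hp hq =>
    simp only [eval_add]
    exact hp.add hq
  | mul_X p i hp =>
    simp only [eval_mul, eval_X]
    exact hp.mul (differentiable_coord i)

theorem partialDer_eval (Q : MvPolynomial (Fin n) ℝ) (r : Fin n) (x : En n) :
    partialDer n r (fun y : En n => eval (fun i => y i) Q) x =
      eval (fun i => x i) (pderiv r Q) := by
  induction Q using MvPolynomial.induction_on with
  | C a => simp [partialDer]
  | add p q hp hq =>
    simp only [map_add]
    rw [partialDer_add (differentiable_eval p x) (differentiable_eval q x), hp, hq]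
  | mul_X p i hp =>
    simp only [eval_mul, eval_X, pderiv_mul, map_add]
    rw [partialDer_mul (differentiable_eval p x) (differentiable_coord i x), hp, partialDer_coord]
    rcases eq_or_ne i r with rfl | h
    · simp
    · simp [h, pderiv_X_of_ne h]

theorem differentiableAt_inv_norm_pow (hx : x ≠ 0) (m : ℕ) :
    DifferentiableAt ℝ (fun y : En n => (‖y‖ ^ m)⁻¹) x :=
  ((differentiableAt_norm_of_ne_zero hx).fun_pow m).fun_inv
    (pow_ne_zero m (norm_ne_zero_iff.mpr hx))

theorem partialDer_inv_norm_pow (hx : x ≠ 0) (m : ℕ) (r : Fin n) :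
    partialDer n r (fun y => (‖y‖ ^ m)⁻¹) x = -m * x r / ‖x‖ ^ (m + 2) := by
  have hnx : ‖x‖ ≠ 0 := norm_ne_zero_iff.mpr hx
  rw [partialDer_comp (hasDerivAt_inv_pow m hnx) (differentiableAt_norm_of_ne_zero hx),
    partialDer_norm hx]
  field_simp
  ring

def evalDivNormPow (Q : MvPolynomial (Fin n) ℝ) (m : ℕ) (y : En n) : ℝ :=
  eval (fun i => y i) Q / ‖y‖ ^ m

theorem evalDivNormPow_eq_mul (Q : MvPolynomial (Fin n) ℝ) (m : ℕ) :
    evalDivNormPow Q m = fun y => eval (fun i => y i) Q * (‖y‖ ^ m)⁻¹ :=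
  rfl

theorem differentiableAt_evalDivNormPow (Q : MvPolynomial (Fin n) ℝ) (m : ℕ) (hx : x ≠ 0) :
    DifferentiableAt ℝ (evalDivNormPow Q m) x := by
  rw [evalDivNormPow_eq_mul]
  exact (differentiable_eval Q x).mul (differentiableAt_inv_norm_pow hx m)

theorem partialDer_evalDivNormPow (Q : MvPolynomial (Fin n) ℝ) (m : ℕ) (hx : x ≠ 0)
    (r : Fin n) :
    partialDer n r (evalDivNormPow Q m) x =
      evalDivNormPow (pderiv r Q) m x - m * evalDivNormPow (X r * Q) (m + 2) x := by
  rw [evalDivNormPow_eq_mul, partialDer_mul (differentiable_eval Q x)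
    (differentiableAt_inv_norm_pow hx m), partialDer_eval, partialDer_inv_norm_pow hx]
  have hnx : ‖x‖ ≠ 0 := norm_ne_zero_iff.mpr hx
  simp only [evalDivNormPow, eval_mul, eval_X]
  field_simp
  ring

theorem partialDer_partialDer_evalDivNormPow (Q : MvPolynomial (Fin n) ℝ) (m : ℕ) (hx : x ≠ 0)
    (r s : Fin n) :
    partialDer n r (partialDer n s (evalDivNormPow Q m)) x =
      evalDivNormPow (pderiv r (pderiv s Q)) m x
        - m * evalDivNormPow (X r * pderiv s Q) (m + 2) x
        - m * (evalDivNormPow (pderiv r (X s * Q)) (m + 2) x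
          - (m + 2) * evalDivNormPow (X r * X s * Q) (m + 4) x) := by
  have hev : partialDer n s (evalDivNormPow Q m) =ᶠ[𝓝 x]
      fun y => evalDivNormPow (pderiv s Q) m y - m * evalDivNormPow (X s * Q) (m + 2) y :=
    (eventually_ne_nhds hx).mono fun y hy => partialDer_evalDivNormPow Q m hy s
  rw [hev.partialDer_eq, partialDer_sub (differentiableAt_evalDivNormPow _ _ hx)
      ((differentiableAt_evalDivNormPow _ _ hx).const_mul _),
    partialDer_const_mul (differentiableAt_evalDivNormPow _ _ hx),
    partialDer_evalDivNormPow _ _ hx, partialDer_evalDivNormPow _ _ hx, mul_assoc (X r)]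
  push_cast
  ring

end PartialDer

open Finset in
theorem sum_partialDer_partialDer_evalDivNormPow {n : ℕ}
    {Q : Fin n → Fin n → MvPolynomial (Fin n) ℝ} (hrow : ∀ r, ∑ s, pderiv s (Q r s) = 0)
    (hcol : ∀ s, ∑ r, pderiv r (Q r s) = 0) (htrace : ∑ r, Q r r = 0) (m : ℕ) {x : En n}
    (hx : x ≠ 0) :
    ∑ r, ∑ s, partialDer n r (partialDer n s (evalDivNormPow (Q r s) m)) x =
      m * (m + 2) *
        (eval (fun i => x i) (∑ r, ∑ s, X r * X s * Q r s) / ‖x‖ ^ (m + 4)) := by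
  have h₁ : ∑ r, ∑ s, pderiv r (pderiv s (Q r s)) = 0 := by
    simp only [← map_sum, hrow, map_zero, sum_const_zero]
  have h₂ : ∑ r, ∑ s, X r * pderiv s (Q r s) = 0 := by
    simp only [← mul_sum, hrow, mul_zero, sum_const_zero]
  have h₃ : ∑ r, ∑ s, pderiv r (X s * Q r s) = 0 := by
    classical
    simp only [pderiv_mul, sum_add_distrib, pderiv_X, Pi.single_apply, ite_mul, one_mul, zero_mul,
      sum_ite_eq', Finset.mem_univ, reduceIte, htrace, zero_add]
    rw [sum_comm]
    simp only [← mul_sum, hcol, mul_zero, sum_const_zero]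
  have heval : ∀ F : Fin n → Fin n → MvPolynomial (Fin n) ℝ,
      ∑ r, ∑ s, eval (fun i => x i) (F r s) = eval (fun i => x i) (∑ r, ∑ s, F r s) := by
    simp only [map_sum, implies_true]
  simp only [partialDer_partialDer_evalDivNormPow _ _ hx, evalDivNormPow, sum_sub_distrib,
    ← mul_sum, ← sum_div]
  rw [heval, heval, heval, heval, h₁, h₂, h₃]
  simp only [map_zero, zero_div]
  ring

/-- for an odd harmonic homogeneous polynomial P of degree l ≥ 3 on ℝⁿ,
n ≥ 3, the polynomials P_{rs} := (l(l−1))⁻¹ ∂_r∂_s P are odd, harmonic, homogeneous of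
degree l−2, satisfy P(x) = Σ_{r,s} x_r x_s P_{rs}(x), and for x ≠ 0 one has
Σ_{r,s} ∂_r∂_s(P_{rs}(x)|x|^{−(n+l−5)}) = (n+l−3)(n+l−5) P(x)|x|^{−(n−1+l)}. -/
theorem semmes_decomposition
    (n : ℕ) (hn : 3 ≤ n) (l : ℕ) (hl : 3 ≤ l)
    (P : MvPolynomial (Fin n) ℝ) (hodd : IsOddPoly n P)
    (hharm : IsHarmonicPoly n P) (hhom : P.IsHomogeneous l)
    (Prs : Fin n → Fin n → MvPolynomial (Fin n) ℝ)
    (hPrs : ∀ r s, Prs r s =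
      ((l : ℝ) * ((l : ℝ) - 1))⁻¹ • MvPolynomial.pderiv r (MvPolynomial.pderiv s P)) :
    (∀ r s, IsOddPoly n (Prs r s) ∧ IsHarmonicPoly n (Prs r s) ∧
        (Prs r s).IsHomogeneous (l - 2)) ∧
    (∀ x : Fin n → ℝ, MvPolynomial.eval x P =
        ∑ r : Fin n, ∑ s : Fin n, x r * x s * MvPolynomial.eval x (Prs r s)) ∧
    (∀ x : En n, x ≠ 0 →
      ∑ r : Fin n, ∑ s : Fin n,
          partialDer n r (partialDer n s
            (fun y => MvPolynomial.eval (fun i => y i) (Prs r s) / ‖y‖ ^ (n + l - 5))) x =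
        ((n : ℝ) + l - 3) * ((n : ℝ) + l - 5) *
          (MvPolynomial.eval (fun i => x i) P / ‖x‖ ^ (n - 1 + l))) := by
  have hhomrs : ∀ r s, (Prs r s).IsHomogeneous (l - 2) := fun r s => by
    rw [hPrs, smul_eq_C_mul, show l - 2 = l - 1 - 1 by omega]
    exact hhom.pderiv.pderiv.C_mul _
  have hdecomp : ∑ r, ∑ s, X r * X s * Prs r s = P := by
    simpa only [hPrs] using hhom.sum_X_mul_X_mul_inv_smul_pderiv_pderiv (by omega)
  have hcol : ∀ s, ∑ r, pderiv r (Prs r s) = 0 := fun s => by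
    simpa only [hPrs] using hharm.sum_pderiv_smul_pderiv_pderiv_left _ s
  have hrow : ∀ r, ∑ s, pderiv s (Prs r s) = 0 := fun r => by
    simpa only [hPrs] using hharm.sum_pderiv_smul_pderiv_pderiv_right _ r
  have htrace : ∑ r, Prs r r = 0 := by
    simpa only [hPrs] using hharm.sum_smul_pderiv_pderiv_self _
  refine ⟨fun r s => ⟨?_, ?_, hhomrs r s⟩, fun x => ?_, fun x hx => ?_⟩
  · rcases Nat.even_or_odd l with he | ho
    · simp [IsOddPoly, hPrs, hodd.eq_zero_of_isHomogeneous hhom he]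
    · exact (hhomrs r s).isOddPoly (Nat.Odd.sub_even (by omega) ho even_two)
  · rw [hPrs]
    exact ((hharm.pderiv s).pderiv r).smul _
  · conv_lhs => rw [← hdecomp]
    simp only [map_sum, eval_mul, eval_X]
  · have key := sum_partialDer_partialDer_evalDivNormPow hrow hcol htrace (n + l - 5) hx
    rw [hdecomp, show n + l - 5 + 4 = n - 1 + l by omega] at key
    refine key.trans ?_
    rw [Nat.cast_sub (by omega : 5 ≤ n + l)]
    push_cast
    ring
end
end

section
/- Let φ : (0,1) → [0,∞) be Lebesgue measurable, and for each k ∈ ℕ₀ let δ_k := 2^{k+1} ∫_{2^{−(k+1)}}^{2^{−k}} φ(r) dr be the average of φ over the dyadic interval I_k = [2^{−(k+1)}, 2^{−k}]. Assume δ_k → 0 as k → ∞. Then there exists a Lebesgue measurable set O ⊆ (0,1) such that lim_{ε→0⁺} ℒ¹(O ∩ (0,ε))/ε = 1 (O has density 1 at 0) and lim_{O∋r→0⁺} φ(r) = 0. -/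
open MeasureTheory Set Filter
open scoped ENNReal Topology

/-!
Take thresholds `c k > 0` with `c k → 0` and `δ k / c k → 0` (for instance `√δ_k + 1/(k+1)`),
and let `O` consist of the points `r` of the dyadic shells `[2^{-(k+1)}, 2^{-k})` with
`φ r < c k`. Then `φ → 0` along `O`, while by Chebyshev's inequality the part of the `k`-th shell
outside `O` has at most the fraction `δ k / c k` of the shell's length. Below
`ε ∈ (2^{-(m+1)}, 2^{-m}]` lie only the shells with `k ≥ m`, of total length
`2^{-m} < 2ε`, so the complement of `O` has density `0` at `0`.
-/

def dyadicShell (k : ℕ) : Set ℝ := Ico ((2 : ℝ) ^ (k + 1))⁻¹ ((2 : ℝ) ^ k)⁻¹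

noncomputable def dyadicAverage (φ : ℝ → ℝ) (k : ℕ) : ℝ≥0∞ :=
  (2 : ℝ≥0∞) ^ (k + 1) * ∫⁻ r in Icc ((2 : ℝ) ^ (k + 1))⁻¹ ((2 : ℝ) ^ k)⁻¹, ENNReal.ofReal (φ r)

lemma ENNReal.ofReal_inv_two_pow (k : ℕ) : ENNReal.ofReal ((2 : ℝ) ^ k)⁻¹ = (2 ^ k)⁻¹ := by
  rw [ENNReal.ofReal_inv_of_pos (by positivity), ENNReal.ofReal_pow zero_le_two,
    ENNReal.ofReal_ofNat]

lemma lt_of_inv_two_pow_lt_inv_two_pow {m n : ℕ} (h : ((2 : ℝ) ^ n)⁻¹ < ((2 : ℝ) ^ m)⁻¹) :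
    m < n :=
  (pow_lt_pow_iff_right₀ one_lt_two).1 ((inv_lt_inv₀ (by positivity) (by positivity)).1 h)

lemma measurableSet_dyadicShell (k : ℕ) : MeasurableSet (dyadicShell k) := measurableSet_Ico

lemma dyadicShell_subset_Ioo (k : ℕ) : dyadicShell k ⊆ Ioo 0 1 :=
  Ico_subset_Ioo (by positivity) (inv_le_one_of_one_le₀ (one_le_pow₀ one_le_two))

lemma volume_dyadicShell (k : ℕ) : volume (dyadicShell k) = (2 ^ (k + 1))⁻¹ := by
  rw [dyadicShell, Real.volume_Ico, ← ENNReal.ofReal_inv_two_pow]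
  congr 1
  rw [pow_succ, mul_inv]
  ring

lemma tsum_volume_dyadicShell_add (m : ℕ) :
    ∑' i, volume (dyadicShell (m + i)) = (2 ^ m)⁻¹ := by
  have h2 : (2 : ℝ≥0∞)⁻¹ * (1 - 2⁻¹)⁻¹ = 1 := by
    rw [ENNReal.one_sub_inv_two, ENNReal.mul_inv_cancel (by simp) (by simp)]
  rw [tsum_congr fun i => by rw [volume_dyadicShell, ENNReal.inv_pow, add_assoc, pow_add],
    ENNReal.tsum_mul_left, ENNReal.tsum_geometric_add_one, h2, mul_one, ENNReal.inv_pow]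

lemma le_of_mem_dyadicShell_of_lt {k m : ℕ} {x : ℝ} (hx : x ∈ dyadicShell k)
    (hxm : x < ((2 : ℝ) ^ m)⁻¹) : m ≤ k :=
  Nat.lt_succ_iff.1 (lt_of_inv_two_pow_lt_inv_two_pow (hx.1.trans_lt hxm))

lemma Ioo_subset_iUnion_dyadicShell (m : ℕ) :
    Ioo 0 ((2 : ℝ) ^ m)⁻¹ ⊆ ⋃ i, dyadicShell (m + i) := by
  classical
  rintro x ⟨hx0, hxm⟩
  have hex : ∃ n, ((2 : ℝ) ^ n)⁻¹ ≤ x := by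
    obtain ⟨n, hn⟩ := exists_pow_lt_of_lt_one hx0 (by norm_num : (2 : ℝ)⁻¹ < 1)
    exact ⟨n, (inv_pow (2 : ℝ) n ▸ hn).le⟩
  obtain ⟨i, hi⟩ : ∃ i, Nat.find hex = m + i + 1 := by
    have hm : m < Nat.find hex := (Nat.lt_find_iff hex m).2 fun n hn hnx =>
      (hxm.trans_le (inv_anti₀ (by positivity) (pow_le_pow_right₀ one_le_two hn))).not_ge hnx
    exact ⟨Nat.find hex - (m + 1), by omega⟩
  refine mem_iUnion.2 ⟨i, ?_, ?_⟩
  · simpa [← hi] using Nat.find_spec hex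
  · exact lt_of_not_ge (Nat.find_min hex (hi ▸ Nat.lt_succ_self _))

lemma volume_Ioo_diff_le_of_forall_dyadicShell {O : Set ℝ} {θ : ℝ≥0∞} {m : ℕ}
    (h : ∀ k ≥ m, volume (dyadicShell k \ O) ≤ θ * volume (dyadicShell k)) :
    volume (Ioo 0 ((2 : ℝ) ^ m)⁻¹ \ O) ≤ θ * (2 ^ m)⁻¹ :=
  calc volume (Ioo 0 ((2 : ℝ) ^ m)⁻¹ \ O)
      ≤ volume (⋃ i, dyadicShell (m + i) \ O) := by
        rw [← iUnion_sdiff]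
        exact measure_mono (sdiff_subset_sdiff_left (Ioo_subset_iUnion_dyadicShell m))
    _ ≤ ∑' i, volume (dyadicShell (m + i) \ O) := measure_iUnion_le _
    _ ≤ ∑' i, θ * volume (dyadicShell (m + i)) :=
        ENNReal.tsum_le_tsum fun i => h _ (Nat.le_add_right m i)
    _ = θ * (2 ^ m)⁻¹ := by rw [ENNReal.tsum_mul_left, tsum_volume_dyadicShell_add]

lemma tendsto_volume_Ioo_diff_div_of_dyadicShell {O : Set ℝ} {η : ℕ → ℝ≥0∞}
    (hη : Tendsto η atTop (𝓝 0))
    (hO : ∀ k, volume (dyadicShell k \ O) ≤ η k * volume (dyadicShell k)) :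
    Tendsto (fun ε => volume (Ioo 0 ε \ O) / ENNReal.ofReal ε) (𝓝[>] 0) (𝓝 0) := by
  refine ENNReal.tendsto_nhds_zero.2 fun t ht => ?_
  obtain ⟨K, hK⟩ := eventually_atTop.1
    (ENNReal.tendsto_nhds_zero.1 hη (t / 2) (ENNReal.half_pos ht.ne'))
  filter_upwards [Ioo_mem_nhdsGT (show (0 : ℝ) < ((2 : ℝ) ^ K)⁻¹ by positivity)]
    with ε ⟨hε0, hεK⟩
  obtain ⟨m, hmε, hεm⟩ := exists_nat_pow_near_of_lt_one hε0
    (hεK.le.trans (inv_le_one_of_one_le₀ (one_le_pow₀ one_le_two)))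
    (by norm_num : (0 : ℝ) < 2⁻¹) (by norm_num : (2 : ℝ)⁻¹ < 1)
  rw [inv_pow] at hmε hεm
  have hKm : K ≤ m := Nat.lt_succ_iff.1 (lt_of_inv_two_pow_lt_inv_two_pow (hmε.trans hεK))
  refine ENNReal.div_le_of_le_mul ?_
  calc volume (Ioo 0 ε \ O)
      ≤ volume (Ioo 0 ((2 : ℝ) ^ m)⁻¹ \ O) :=
        measure_mono (sdiff_subset_sdiff_left (Ioo_subset_Ioo_right hεm))
    _ ≤ t / 2 * (2 ^ m)⁻¹ := volume_Ioo_diff_le_of_forall_dyadicShell fun k hk =>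
        (hO k).trans (mul_le_mul_left (hK k (hKm.trans hk)) _)
    _ = t * (2 ^ (m + 1))⁻¹ := by
        rw [pow_succ, ENNReal.mul_inv (a := 2 ^ m) (b := 2) (by simp) (by simp), div_eq_mul_inv,
          mul_assoc, mul_comm 2⁻¹]
    _ ≤ t * ENNReal.ofReal ε := by
        rw [← ENNReal.ofReal_inv_two_pow]
        exact mul_le_mul_right (ENNReal.ofReal_le_ofReal hmε.le) _

lemma tendsto_toReal_volume_inter_Ioo_div {O : Set ℝ} (hO : MeasurableSet O)
    (h : Tendsto (fun ε => volume (Ioo 0 ε \ O) / ENNReal.ofReal ε) (𝓝[>] 0) (𝓝 0)) :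
    Tendsto (fun ε : ℝ => (volume (O ∩ Ioo 0 ε)).toReal / ε) (𝓝[>] 0) (𝓝 1) := by
  have hsplit : ∀ ε > 0, (volume (O ∩ Ioo 0 ε)).toReal / ε =
      1 - (volume (Ioo 0 ε \ O) / ENNReal.ofReal ε).toReal := by
    intro ε hε
    have hadd : volume (O ∩ Ioo 0 ε) + volume (Ioo 0 ε \ O) = ENNReal.ofReal ε := by
      rw [inter_comm, measure_inter_add_sdiff _ hO, Real.volume_Ioo, sub_zero]
    have hfin := ENNReal.add_ne_top.1 (hadd ▸ ENNReal.ofReal_ne_top)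
    rw [ENNReal.toReal_div, ENNReal.toReal_ofReal hε.le, eq_sub_iff_add_eq, ← add_div,
      ← ENNReal.toReal_add hfin.1 hfin.2, hadd, ENNReal.toReal_ofReal hε.le, div_self hε.ne']
  have h' := (ENNReal.tendsto_toReal ENNReal.zero_ne_top).comp h
  rw [ENNReal.toReal_zero] at h'
  have h1 : Tendsto (fun ε => 1 - (volume (Ioo 0 ε \ O) / ENNReal.ofReal ε).toReal)
      (𝓝[>] 0) (𝓝 1) := by
    simpa using tendsto_const_nhds.sub h'
  exact h1.congr' (eventually_mem_nhdsWithin.mono fun ε hε => (hsplit ε hε).symm)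

lemma volume_dyadicShell_inter_le {φ : ℝ → ℝ} (hφ : Measurable φ) (k : ℕ) {c : ℝ}
    (hc : 0 < c) :
    volume (dyadicShell k ∩ {r | c ≤ φ r}) ≤
      dyadicAverage φ k / ENNReal.ofReal c * volume (dyadicShell k) :=
  calc volume (dyadicShell k ∩ {r | c ≤ φ r})
      ≤ volume.restrict (dyadicShell k) {r | ENNReal.ofReal c ≤ ENNReal.ofReal (φ r)} := by
        rw [Measure.restrict_apply' (measurableSet_dyadicShell k), inter_comm]
        exact measure_mono (inter_subset_inter_left _ fun r hr => ENNReal.ofReal_le_ofReal hr)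
    _ ≤ (∫⁻ r in dyadicShell k, ENNReal.ofReal (φ r)) / ENNReal.ofReal c :=
        meas_ge_le_lintegral_div hφ.ennreal_ofReal.aemeasurable
          (ENNReal.ofReal_pos.2 hc).ne' ENNReal.ofReal_ne_top
    _ ≤ (∫⁻ r in Icc ((2 : ℝ) ^ (k + 1))⁻¹ ((2 : ℝ) ^ k)⁻¹, ENNReal.ofReal (φ r)) /
          ENNReal.ofReal c := by
        gcongr
        exact Ico_subset_Icc_self
    _ = dyadicAverage φ k / ENNReal.ofReal c * volume (dyadicShell k) := by
        rw [dyadicAverage, volume_dyadicShell, div_eq_mul_inv, div_eq_mul_inv,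
          mul_right_comm _ _ (2 ^ (k + 1))⁻¹, mul_right_comm (2 ^ (k + 1)),
          ENNReal.mul_inv_cancel (by simp) (by simp), one_mul]

lemma exists_pos_tendsto_zero_and_div_tendsto_zero {δ : ℕ → ℝ≥0∞}
    (hδ : Tendsto δ atTop (𝓝 0)) :
    ∃ c : ℕ → ℝ, (∀ k, 0 < c k) ∧ Tendsto c atTop (𝓝 0) ∧
      Tendsto (fun k => δ k / ENNReal.ofReal (c k)) atTop (𝓝 0) := by
  have hsqrt : Tendsto (fun k => √(δ k).toReal) atTop (𝓝 0) := by
    simpa [Function.comp_def] using (Real.continuous_sqrt.tendsto 0).comp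
      ((ENNReal.tendsto_toReal ENNReal.zero_ne_top).comp hδ)
  refine ⟨fun k => √(δ k).toReal + 1 / (k + 1), fun k => by positivity,
    by simpa using hsqrt.add tendsto_one_div_add_atTop_nhds_zero_nat, ?_⟩
  refine tendsto_of_tendsto_of_tendsto_of_le_of_le' tendsto_const_nhds
    (by simpa using ENNReal.tendsto_ofReal hsqrt) (Eventually.of_forall fun _ => zero_le) ?_
  filter_upwards [hδ.eventually (gt_mem_nhds ENNReal.zero_lt_top)] with k hk
  refine ENNReal.div_le_of_le_mul ?_
  rw [← ENNReal.ofReal_toReal hk.ne, ← ENNReal.ofReal_mul (Real.sqrt_nonneg _),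
    ENNReal.toReal_ofReal ENNReal.toReal_nonneg]
  refine ENNReal.ofReal_le_ofReal ?_
  have := Real.mul_self_sqrt (ENNReal.toReal_nonneg (a := δ k))
  have : 0 ≤ √(δ k).toReal * (1 / (k + 1)) := by positivity
  nlinarith

theorem density_one_set_with_vanishing_averages_general
    (φ : ℝ → ℝ) (hmeas : Measurable φ)
    (hδ : Filter.Tendsto
      (fun k : ℕ => (2 : ℝ≥0∞) ^ (k + 1) *
        ∫⁻ r in Set.Icc (((2 : ℝ) ^ (k + 1))⁻¹) (((2 : ℝ) ^ k)⁻¹), ENNReal.ofReal (φ r))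
      Filter.atTop (𝓝 0)) :
    ∃ O : Set ℝ, O ⊆ Set.Ioo (0 : ℝ) 1 ∧ MeasurableSet O ∧
      Filter.Tendsto (fun ε : ℝ => (volume (O ∩ Set.Ioo (0 : ℝ) ε)).toReal / ε)
        (𝓝[>] 0) (𝓝 1) ∧
      ∀ δ : ℝ, 0 < δ → ∃ r₀ : ℝ, 0 < r₀ ∧ ∀ r ∈ O, r < r₀ → φ r < δ := by
  obtain ⟨c, hc_pos, hc, hδc⟩ :=
    exists_pos_tendsto_zero_and_div_tendsto_zero (δ := dyadicAverage φ) hδ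
  set O := ⋃ k, dyadicShell k ∩ {r | φ r < c k}
  have hO : MeasurableSet O :=
    .iUnion fun k => (measurableSet_dyadicShell k).inter (hmeas measurableSet_Iio)
  refine ⟨O, iUnion_subset fun k => inter_subset_left.trans (dyadicShell_subset_Ioo k), hO,
    tendsto_toReal_volume_inter_Ioo_div hO
      (tendsto_volume_Ioo_diff_div_of_dyadicShell hδc fun k => ?_), fun d hd => ?_⟩
  · have hbad : dyadicShell k \ O ⊆ dyadicShell k ∩ {r | c k ≤ φ r} := fun r hr =>
      ⟨hr.1, show c k ≤ φ r from not_lt.1 fun hlt => hr.2 (mem_iUnion.2 ⟨k, hr.1, hlt⟩)⟩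
    exact (measure_mono hbad).trans (volume_dyadicShell_inter_le hmeas k (hc_pos k))
  · obtain ⟨K, hK⟩ := eventually_atTop.1 (hc.eventually (gt_mem_nhds hd))
    refine ⟨((2 : ℝ) ^ K)⁻¹, by positivity, fun r hr hrK => ?_⟩
    obtain ⟨k, hk, hφk⟩ := mem_iUnion.1 hr
    exact hφk.trans (hK k (le_of_mem_dyadicShell_of_lt hk hrK))

/-- if φ : (0,1) → [0,∞) is measurable and its averages δ_k over the dyadic
intervals I_k = [2^{−(k+1)}, 2^{−k}] tend to 0, then there is a measurable set
O ⊆ (0,1) of density 1 at 0 along which φ(r) → 0 as r → 0⁺. -/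
theorem density_one_set_with_vanishing_averages
    (φ : ℝ → ℝ) (hmeas : Measurable φ) (hnonneg : ∀ r ∈ Set.Ioo (0 : ℝ) 1, 0 ≤ φ r)
    (hδ : Filter.Tendsto
      (fun k : ℕ => (2 : ℝ≥0∞) ^ (k + 1) *
        ∫⁻ r in Set.Icc (((2 : ℝ) ^ (k + 1))⁻¹) (((2 : ℝ) ^ k)⁻¹), ENNReal.ofReal (φ r))
      Filter.atTop (𝓝 0)) :
    ∃ O : Set ℝ, O ⊆ Set.Ioo (0 : ℝ) 1 ∧ MeasurableSet O ∧
      Filter.Tendsto (fun ε : ℝ => (volume (O ∩ Set.Ioo (0 : ℝ) ε)).toReal / ε)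
        (𝓝[>] 0) (𝓝 1) ∧
      ∀ δ : ℝ, 0 < δ → ∃ r₀ : ℝ, 0 < r₀ ∧ ∀ r ∈ O, r < r₀ → φ r < δ :=
  density_one_set_with_vanishing_averages_general φ hmeas hδ
end
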